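/- Let f : 𝕋 → B(M) be continuous in the operator norm and let C ≥ 0 be such that for all s, t ∈ 𝕋 and all Borel sets ω ⊆ 𝕋 one has f(s)·ν(ω)·f(s)* ⪯ C·ν(ω) and (f(s) − f(t))·ν(ω)·(f(s) − f(t))* ⪯ ‖f(s) − f(t)‖²·ν(ω) (inequalities of positive operators). Then for every m ∈ M the function F : 𝕋 → M defined by F(s) := f(s)* m is ν-admissible. -/

import Mathlib

open ContinuousLinearMap

/-- The unit circle `𝕋 ⊆ ℂ` as a type, with its Borel σ-algebra (induced from `ℂ`). -/
abbrev Torus : Type := ↥(Metric.sphere (0 : ℂ) 1)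

/-- A finite Borel partition of `X`. -/
structure BorelPartition (X : Type*) [MeasurableSpace X] where
  n : ℕ
  piece : Fin n → Set X
  meas : ∀ i, MeasurableSet (piece i)
  disj : Pairwise (Function.onFun Disjoint piece)
  cover : (⋃ i, piece i) = Set.univ

/-- A tagged finite Borel partition of `X`: a finite Borel partition together
with a tag `tag i ∈ piece i` for each piece. -/
structure TaggedPartition (X : Type*) [MeasurableSpace X] where
  n : ℕ
  piece : Fin n → Set X
  meas : ∀ i, MeasurableSet (piece i)
  disj : Pairwise (Function.onFun Disjoint piece)
  cover : (⋃ i, piece i) = Set.univ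
  tag : Fin n → X
  tag_mem : ∀ i, tag i ∈ piece i

/-- The (untagged) partition of a tagged partition `P` refines `Q`. -/
def TaggedPartition.Refines {X : Type*} [MeasurableSpace X]
    (P : TaggedPartition X) (Q : BorelPartition X) : Prop :=
  ∀ i : Fin P.n, ∃ j : Fin Q.n, P.piece i ⊆ Q.piece j

variable {M : Type*} [NormedAddCommGroup M] [InnerProductSpace ℂ M] [CompleteSpace M]

/-- An operator-valued measure on `X`: positive operator values on Borel sets and
weak countable additivity. -/
structure OpMeasure (X : Type*) [MeasurableSpace X] (M : Type*) [NormedAddCommGroup M]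
    [InnerProductSpace ℂ M] [CompleteSpace M] where
  toFun : Set X → (M →L[ℂ] M)
  pos : ∀ ω : Set X, MeasurableSet ω → (toFun ω).IsPositive
  countably_additive : ∀ (e f : M) (g : ℕ → Set X), (∀ k, MeasurableSet (g k)) →
    Pairwise (Function.onFun Disjoint g) →
    HasSum (fun k => (inner ℂ (toFun (g k) e) f : ℂ)) (inner ℂ (toFun (⋃ k, g k) e) f)

/-- `⟨F(P,S), G(P,S)⟩_ν := ∑_j ⟨ν(ω_j) F(s_j), G(s_j)⟩`. -/
noncomputable def pairSumNu {X : Type*} [MeasurableSpace X]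
    (ν : Set X → (M →L[ℂ] M)) (P : TaggedPartition X) (F G : X → M) : ℂ :=
  ∑ i : Fin P.n, (inner ℂ (ν (P.piece i) (F (P.tag i))) (G (P.tag i)) : ℂ)

/-- `‖F(P,S)‖_ν²`. -/
noncomputable def normSqNu {X : Type*} [MeasurableSpace X]
    (ν : Set X → (M →L[ℂ] M)) (P : TaggedPartition X) (F : X → M) : ℝ :=
  (pairSumNu ν P F F).re

/-- `‖F(P,S) − F(P′,S′)‖_ν²` (the mixed-refinement square distance). -/
noncomputable def crossSqNu {X : Type*} [MeasurableSpace X]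
    (ν : Set X → (M →L[ℂ] M)) (P P' : TaggedPartition X) (F : X → M) : ℝ :=
  ∑ i : Fin P.n, ∑ j : Fin P'.n,
    ((inner ℂ (ν (P.piece i ∩ P'.piece j) (F (P.tag i) - F (P'.tag j)))
        (F (P.tag i) - F (P'.tag j)) : ℂ)).re

/-- `F` is ν-admissible: the net of simple approximants `F(P,S)` is bounded and
Cauchy in the ν-seminorm. -/
def NuAdmissible {X : Type*} [MeasurableSpace X]
    (ν : Set X → (M →L[ℂ] M)) (F : X → M) : Prop :=
  (∃ C : ℝ, ∀ P : TaggedPartition X, Real.sqrt (normSqNu ν P F) ≤ C) ∧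
  ∀ ε : ℝ, 0 < ε → ∃ Q : BorelPartition X, ∀ P P' : TaggedPartition X,
    P.Refines Q → P'.Refines Q → Real.sqrt (crossSqNu ν P P' F) < ε

/-!
Everything reduces to the scalar measure `ω ↦ ⟪ν(ω) m, m⟫` of total mass `K`, through
`⟪ν(ω) A* m, A* m⟫ = ⟪A ν(ω) A* m, m⟫`. The first hypothesis then gives `‖F(P,S)‖² ≤ C K`.
On a Borel partition so fine that `f` varies by less than `√η` on each piece (uniform
continuity on the compact circle), two refinements only pair tags lying in a common piece,
so the second hypothesis bounds each cell of the cross sum and `‖F(P,S) − F(P′,S′)‖² ≤ η K`.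
-/

open Function

namespace OpMeasure

variable {X : Type*} [MeasurableSpace X] (ν : OpMeasure X M)

lemma inner_empty (e g : M) : inner ℂ (ν.toFun ∅ e) g = 0 := by
  have h := ν.countably_additive e g (fun _ => ∅) (fun _ => .empty) (fun _ _ _ => by simp)
  rw [Set.iUnion_empty] at h
  exact tendsto_nhds_unique tendsto_const_nhds h.summable.tendsto_atTop_zero

lemma hasSum_inner_iUnion {β : Type*} [Countable β] {w : β → Set X}
    (hm : ∀ i, MeasurableSet (w i)) (hd : Pairwise (Disjoint on w)) (e g : M) :
    HasSum (fun i => inner ℂ (ν.toFun (w i) e) g) (inner ℂ (ν.toFun (⋃ i, w i) e) g) := by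
  obtain ⟨k, hk⟩ := Countable.exists_injective_nat β
  rw [← hasSum_extend_zero hk]
  convert ν.countably_additive e g (Function.extend k w fun _ => ∅) _ _ using 1
  · ext n
    by_cases hn : ∃ i, k i = n
    · obtain ⟨i, rfl⟩ := hn
      simp [hk.extend_apply]
    · simp [Function.extend_apply' _ _ _ hn, inner_empty]
  · exact congrArg (fun s => inner ℂ (ν.toFun s e) g) (iSup_extend_bot hk w).symm
  · intro n
    by_cases hn : ∃ i, k i = n
    · obtain ⟨i, rfl⟩ := hn
      simpa [hk.extend_apply] using hm i
    · simp [Function.extend_apply' _ _ _ hn]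
  · exact hd.disjoint_extend_bot (hk.factorsThrough _)

lemma sum_inner_iUnion {β : Type*} [Fintype β] {w : β → Set X}
    (hm : ∀ i, MeasurableSet (w i)) (hd : Pairwise (Disjoint on w)) (e g : M) :
    ∑ i, inner ℂ (ν.toFun (w i) e) g = inner ℂ (ν.toFun (⋃ i, w i) e) g :=
  (hasSum_fintype _).unique (ν.hasSum_inner_iUnion hm hd e g)

lemma re_inner_nonneg {ω : Set X} (hω : MeasurableSet ω) (e : M) :
    0 ≤ (inner ℂ (ν.toFun ω e) e).re :=
  (Complex.nonneg_iff.1 ((ν.pos ω hω).inner_nonneg_left e)).1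

lemma sum_re_inner_inter_piece {ω : Set X} (hω : MeasurableSet ω) (P : TaggedPartition X)
    (e : M) :
    ∑ i, (inner ℂ (ν.toFun (ω ∩ P.piece i) e) e).re = (inner ℂ (ν.toFun ω e) e).re := by
  rw [← Complex.re_sum, ν.sum_inner_iUnion (fun i => hω.inter (P.meas i))
    (fun i j hij => (P.disj hij).mono Set.inter_subset_right Set.inter_subset_right),
    ← Set.inter_iUnion, P.cover, Set.inter_univ]

lemma sum_re_inner_piece (P : TaggedPartition X) (e : M) :
    ∑ i, (inner ℂ (ν.toFun (P.piece i) e) e).re = (inner ℂ (ν.toFun Set.univ e) e).re := by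
  simpa using ν.sum_re_inner_inter_piece .univ P e

end OpMeasure

lemma re_inner_adjoint_le_of_isPositive {A T B : M →L[ℂ] M} {c : ℝ}
    (h : ((c : ℂ) • B - A ∘L T ∘L adjoint A).IsPositive) (x : M) :
    (inner ℂ (T (adjoint A x)) (adjoint A x)).re ≤ c * (inner ℂ (B x) x).re := by
  have hx := (Complex.nonneg_iff.1 (h.inner_nonneg_left x)).1
  simp only [sub_apply, smul_apply, ContinuousLinearMap.comp_apply, inner_sub_left,
    inner_smul_left, Complex.sub_re, Complex.conj_ofReal, Complex.re_ofReal_mul] at hx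
  rw [adjoint_inner_right]
  linarith

section Partition

variable {X : Type*} [MeasurableSpace X]

def BorelPartition.ofCover {n : ℕ} (U : Fin n → Set X) (hU : ∀ i, MeasurableSet (U i))
    (hcover : ⋃ i, U i = Set.univ) : BorelPartition X where
  n := n
  piece := disjointed U
  meas _ := disjointedRec (fun _ _ ht => ht.diff (hU _)) (hU _)
  disj := disjoint_disjointed U
  cover := iUnion_disjointed.trans hcover

lemma BorelPartition.ofCover_piece_subset {n : ℕ} (U : Fin n → Set X)
    (hU : ∀ i, MeasurableSet (U i)) (hcover : ⋃ i, U i = Set.univ) (i : Fin n) :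
    (BorelPartition.ofCover U hU hcover).piece i ⊆ U i :=
  disjointed_subset U i

lemma BorelPartition.exists_forall_dist_lt [PseudoMetricSpace X] [CompactSpace X]
    [OpensMeasurableSpace X] {δ : ℝ} (hδ : 0 < δ) :
    ∃ Q : BorelPartition X, ∀ k, ∀ s ∈ Q.piece k, ∀ t ∈ Q.piece k, dist s t < δ := by
  obtain ⟨c, hc⟩ := isCompact_univ.elim_finite_subcover (fun x : X => Metric.ball x (δ / 2))
    (fun _ => Metric.isOpen_ball)
    fun x _ => Set.mem_iUnion.2 ⟨x, Metric.mem_ball_self (by positivity)⟩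
  let U : Fin c.card → Set X := fun i => Metric.ball (c.equivFin.symm i) (δ / 2)
  have hcover : ⋃ i, U i = Set.univ := by
    refine Set.eq_univ_of_univ_subset (hc.trans fun x hx => ?_)
    obtain ⟨y, hy, hxy⟩ := Set.mem_iUnion₂.1 hx
    exact Set.mem_iUnion.2 ⟨c.equivFin ⟨y, hy⟩, by simpa [U] using hxy⟩
  refine ⟨.ofCover U (fun _ => measurableSet_ball) hcover, fun k s hs t ht => ?_⟩
  have hs' := BorelPartition.ofCover_piece_subset _ _ hcover k hs
  have ht' := BorelPartition.ofCover_piece_subset _ _ hcover k ht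
  calc dist s t ≤ dist s (c.equivFin.symm k) + dist t (c.equivFin.symm k) :=
        dist_triangle_right _ _ _
    _ < δ / 2 + δ / 2 := add_lt_add hs' ht'
    _ = δ := add_halves δ

lemma TaggedPartition.Refines.exists_common_piece {P P' : TaggedPartition X}
    {Q : BorelPartition X} (hP : P.Refines Q) (hP' : P'.Refines Q) {i : Fin P.n} {j : Fin P'.n}
    (hij : (P.piece i ∩ P'.piece j).Nonempty) :
    ∃ k, P.piece i ⊆ Q.piece k ∧ P'.piece j ⊆ Q.piece k := by
  obtain ⟨x, hxi, hxj⟩ := hij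
  obtain ⟨k, hk⟩ := hP i
  obtain ⟨k', hk'⟩ := hP' j
  obtain rfl : k = k' := Q.disj.eq (Set.not_disjoint_iff.2 ⟨x, hk hxi, hk' hxj⟩)
  exact ⟨k, hk, hk'⟩

end Partition

section Admissible

variable {X : Type*} [MeasurableSpace X] (ν : OpMeasure X M) {f : X → (M →L[ℂ] M)}

lemma normSqNu_adjoint_apply_le {C : ℝ}
    (hbd : ∀ (s : X) (ω : Set X), MeasurableSet ω →
      ((C : ℂ) • ν.toFun ω - f s ∘L ν.toFun ω ∘L adjoint (f s)).IsPositive)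
    (P : TaggedPartition X) (m : M) :
    normSqNu ν.toFun P (fun s => adjoint (f s) m) ≤ C * (inner ℂ (ν.toFun Set.univ m) m).re :=
  calc normSqNu ν.toFun P (fun s => adjoint (f s) m)
      = ∑ i, (inner ℂ (ν.toFun (P.piece i) (adjoint (f (P.tag i)) m))
          (adjoint (f (P.tag i)) m)).re := Complex.re_sum _ _
    _ ≤ ∑ i, C * (inner ℂ (ν.toFun (P.piece i) m) m).re := Finset.sum_le_sum fun i _ =>
        re_inner_adjoint_le_of_isPositive (hbd _ _ (P.meas i)) m
    _ = C * (inner ℂ (ν.toFun Set.univ m) m).re := by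
        rw [← Finset.mul_sum, ν.sum_re_inner_piece]

lemma crossSqNu_adjoint_apply_le {η : ℝ}
    (hdiff : ∀ (s t : X) (ω : Set X), MeasurableSet ω →
      (((‖f s - f t‖ ^ 2 : ℝ) : ℂ) • ν.toFun ω -
        (f s - f t) ∘L ν.toFun ω ∘L adjoint (f s - f t)).IsPositive)
    {Q : BorelPartition X}
    (hQ : ∀ k, ∀ s ∈ Q.piece k, ∀ t ∈ Q.piece k, ‖f s - f t‖ ^ 2 ≤ η)
    {P P' : TaggedPartition X} (hP : P.Refines Q) (hP' : P'.Refines Q) (m : M) :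
    crossSqNu ν.toFun P P' (fun s => adjoint (f s) m)
      ≤ η * (inner ℂ (ν.toFun Set.univ m) m).re := by
  have hterm : ∀ i j, (inner ℂ (ν.toFun (P.piece i ∩ P'.piece j)
        (adjoint (f (P.tag i)) m - adjoint (f (P'.tag j)) m))
        (adjoint (f (P.tag i)) m - adjoint (f (P'.tag j)) m)).re
      ≤ η * (inner ℂ (ν.toFun (P.piece i ∩ P'.piece j) m) m).re := by
    intro i j
    rcases Set.eq_empty_or_nonempty (P.piece i ∩ P'.piece j) with hempty | hne
    · simp [hempty, ν.inner_empty]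
    obtain ⟨k, hik, hjk⟩ := hP.exists_common_piece hP' hne
    have hmeas := (P.meas i).inter (P'.meas j)
    rw [← sub_apply, ← map_sub]
    calc _ ≤ ‖f (P.tag i) - f (P'.tag j)‖ ^ 2
          * (inner ℂ (ν.toFun (P.piece i ∩ P'.piece j) m) m).re :=
          re_inner_adjoint_le_of_isPositive (hdiff _ _ _ hmeas) m
      _ ≤ _ := mul_le_mul_of_nonneg_right
          (hQ k _ (hik (P.tag_mem i)) _ (hjk (P'.tag_mem j))) (ν.re_inner_nonneg hmeas m)
  calc crossSqNu ν.toFun P P' (fun s => adjoint (f s) m)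
      ≤ ∑ i, ∑ j, η * (inner ℂ (ν.toFun (P.piece i ∩ P'.piece j) m) m).re :=
        Finset.sum_le_sum fun i _ => Finset.sum_le_sum fun j _ => hterm i j
    _ = η * (inner ℂ (ν.toFun Set.univ m) m).re := by
        simp only [← Finset.mul_sum, ν.sum_re_inner_inter_piece (P.meas _),
          ν.sum_re_inner_piece]

lemma exists_borelPartition_crossSqNu_adjoint_apply_le [PseudoMetricSpace X] [CompactSpace X]
    [OpensMeasurableSpace X] (hf : Continuous f)
    (hdiff : ∀ (s t : X) (ω : Set X), MeasurableSet ω →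
      (((‖f s - f t‖ ^ 2 : ℝ) : ℂ) • ν.toFun ω -
        (f s - f t) ∘L ν.toFun ω ∘L adjoint (f s - f t)).IsPositive)
    {η : ℝ} (hη : 0 < η) (m : M) :
    ∃ Q : BorelPartition X, ∀ P P' : TaggedPartition X, P.Refines Q → P'.Refines Q →
      crossSqNu ν.toFun P P' (fun s => adjoint (f s) m)
        ≤ η * (inner ℂ (ν.toFun Set.univ m) m).re := by
  obtain ⟨δ, hδ, hfδ⟩ := Metric.uniformContinuous_iff.1
    (CompactSpace.uniformContinuous_of_continuous hf) _ (Real.sqrt_pos.2 hη)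
  obtain ⟨Q, hQ⟩ := BorelPartition.exists_forall_dist_lt (X := X) hδ
  refine ⟨Q, fun P P' hP hP' =>
    crossSqNu_adjoint_apply_le ν hdiff (fun k s hs t ht => ?_) hP hP' m⟩
  have h := hfδ (hQ k s hs t ht)
  rw [dist_eq_norm, Real.lt_sqrt (norm_nonneg _)] at h
  exact h.le

end Admissible

theorem stmt14_general (ν : OpMeasure Torus M)
    (f : Torus → (M →L[ℂ] M)) (hf : Continuous f)
    (C : ℝ)
    (hbd : ∀ (s : Torus) (ω : Set Torus), MeasurableSet ω →
      ((C : ℂ) • ν.toFun ω - f s ∘L ν.toFun ω ∘L adjoint (f s)).IsPositive)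
    (hdiff : ∀ (s t : Torus) (ω : Set Torus), MeasurableSet ω →
      (((‖f s - f t‖ ^ 2 : ℝ) : ℂ) • ν.toFun ω -
        (f s - f t) ∘L ν.toFun ω ∘L adjoint (f s - f t)).IsPositive) :
    ∀ m : M, NuAdmissible ν.toFun (fun s => adjoint (f s) m) := by
  intro m
  set K := (inner ℂ (ν.toFun Set.univ m) m).re
  have hK : 0 ≤ K := ν.re_inner_nonneg .univ m
  refine ⟨⟨√(C * K), fun P => Real.sqrt_le_sqrt (normSqNu_adjoint_apply_le ν hbd P m)⟩,
    fun ε hε => ?_⟩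
  obtain ⟨Q, hQ⟩ := exists_borelPartition_crossSqNu_adjoint_apply_le ν hf hdiff
    (η := ε ^ 2 / (K + 1)) (by positivity) m
  refine ⟨Q, fun P P' hP hP' => (Real.sqrt_lt' hε).2 ((hQ P P' hP hP').trans_lt ?_)⟩
  rw [div_mul_eq_mul_div, div_lt_iff₀ (by positivity)]
  nlinarith [pow_pos hε 2]

/-- If `f : 𝕋 → B(M)` is norm-continuous with `f(s) ν(ω) f(s)^* ⪯ C ν(ω)` and
`(f(s)−f(t)) ν(ω) (f(s)−f(t))^* ⪯ ‖f(s)−f(t)‖² ν(ω)` for all `s, t` and Borel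
`ω`, then for each `m ∈ M` the function `s ↦ f(s)^* m` is ν-admissible. -/
theorem stmt14 (ν : OpMeasure Torus M)
    (f : Torus → (M →L[ℂ] M)) (hf : Continuous f)
    (C : ℝ) (hC : 0 ≤ C)
    (hbd : ∀ (s : Torus) (ω : Set Torus), MeasurableSet ω →
      ((C : ℂ) • ν.toFun ω - f s ∘L ν.toFun ω ∘L adjoint (f s)).IsPositive)
    (hdiff : ∀ (s t : Torus) (ω : Set Torus), MeasurableSet ω →
      (((‖f s - f t‖ ^ 2 : ℝ) : ℂ) • ν.toFun ω -
        (f s - f t) ∘L ν.toFun ω ∘L adjoint (f s - f t)).IsPositive) :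
    ∀ m : M, NuAdmissible ν.toFun (fun s => adjoint (f s) m) :=
  stmt14_general ν f hf C hbd hdiff
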